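/- arXiv:2108.11552 — 3 statements merged into one kernel-verified Lean document; each statement's English description precedes it below -/
import Mathlib

section
/- Let H be a real Hilbert space and A : H → H a bounded, self-adjoint, positive semidefinite operator. For u ∈ H with Au ≠ 0, set û = Au / ‖Au‖. Then −⟨Au, u⟩ ≥ −⟨Aû, û⟩ whenever ‖u‖ ≤ 1. Equivalently, one normalized application of A does not increase the energy −⟨A·,·⟩ on the unit ball. -/
/-!
Positivity of `A` applied to `v - u` gives `2 ⟪A u, v⟫ ≤ ⟪A u, u⟫ + ⟪A v, v⟫`, so the energy
`⟪A ·, ·⟫` can only grow when passing from `u` to any `v` with `⟪A u, u⟫ ≤ ⟪A u, v⟫`. For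
`v = ‖A u‖⁻¹ • A u` we have `⟪A u, v⟫ = ‖A u‖`, which dominates `⟪A u, u⟫` by Cauchy–Schwarz
as soon as `‖u‖ ≤ 1`.
-/

open RealInnerProductSpace

section

variable {H : Type*} [NormedAddCommGroup H] [InnerProductSpace ℝ H]

theorem real_inner_inv_norm_smul_self (x : H) : ⟪x, ‖x‖⁻¹ • x⟫ = ‖x‖ := by
  rw [real_inner_smul_self_right, ← mul_assoc, inv_mul_mul_self]

namespace LinearMap.IsPositive

variable {T : H →ₗ[ℝ] H}

theorem two_mul_inner_map_le (hT : T.IsPositive) (u v : H) :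
    2 * ⟪T u, v⟫ ≤ ⟪T u, u⟫ + ⟪T v, v⟫ := by
  have hsymm : ⟪T v, u⟫ = ⟪T u, v⟫ := by
    rw [hT.isSymmetric v u, real_inner_comm]
  have hexpand : ⟪T (v - u), v - u⟫ = ⟪T v, v⟫ - 2 * ⟪T u, v⟫ + ⟪T u, u⟫ := by
    rw [map_sub, inner_sub_left, inner_sub_right, inner_sub_right, hsymm]
    ring
  linarith [hT.inner_nonneg_left (v - u)]

theorem inner_map_self_le_of_le_inner (hT : T.IsPositive) {u v : H}
    (h : ⟪T u, u⟫ ≤ ⟪T u, v⟫) : ⟪T u, u⟫ ≤ ⟪T v, v⟫ := by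
  linarith [hT.two_mul_inner_map_le u v]

end LinearMap.IsPositive

end

theorem stmt5_general {H : Type*} [NormedAddCommGroup H] [InnerProductSpace ℝ H]
    (A : H →L[ℝ] H) (hsa : ∀ x y : H, ⟪A x, y⟫ = ⟪x, A y⟫)
    (hpsd : ∀ x : H, 0 ≤ ⟪A x, x⟫)
    (u : H) (hu : ‖u‖ ≤ 1) :
    -⟪A u, u⟫ ≥ -⟪A (‖A u‖⁻¹ • A u), ‖A u‖⁻¹ • A u⟫ := by
  have hA : (A : H →ₗ[ℝ] H).IsPositive := (A : H →ₗ[ℝ] H).isPositive_iff.mpr ⟨hsa, hpsd⟩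
  have hcs : ⟪A u, u⟫ ≤ ⟪A u, ‖A u‖⁻¹ • A u⟫ :=
    calc ⟪A u, u⟫ ≤ ‖A u‖ * ‖u‖ := real_inner_le_norm _ _
      _ ≤ ‖A u‖ := mul_le_of_le_one_right (norm_nonneg _) hu
      _ = ⟪A u, ‖A u‖⁻¹ • A u⟫ := (real_inner_inv_norm_smul_self _).symm
  exact neg_le_neg (hA.inner_map_self_le_of_le_inner hcs)

theorem stmt5 {H : Type*} [NormedAddCommGroup H] [InnerProductSpace ℝ H]
    (A : H →L[ℝ] H) (hsa : ∀ x y : H, ⟪A x, y⟫ = ⟪x, A y⟫)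
    (hpsd : ∀ x : H, 0 ≤ ⟪A x, x⟫)
    (u : H) (hu : ‖u‖ ≤ 1) (hAu : A u ≠ 0) :
    -⟪A u, u⟫ ≥ -⟪A (‖A u‖⁻¹ • A u), ‖A u‖⁻¹ • A u⟫ :=
  stmt5_general A hsa hpsd u hu
end

section
/- Let H be a real Hilbert space and A : H → H bounded self-adjoint positive semidefinite. Define the iteration u^{n+1} = A u^n / ‖A u^n‖ (assuming Au^n ≠ 0 for all n) starting from ‖u⁰‖ = 1. Then the energy E(u) = −⟨Au, u⟩ is nonincreasing along the iteration: E(u^{n+1}) ≤ E(u^n) for all n. -/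
/-!
Write `w = A v` for a vector `v` with `‖v‖ ≤ 1`. Cauchy–Schwarz for the semi-inner product
`(x, y) ↦ ⟪A x, y⟫`, applied to `v` and `w`, gives `‖w‖⁴ ≤ ⟪A v, v⟫ ⟪A w, w⟫`, while
`⟪A v, v⟫ ≤ ‖w‖`. Together they give `⟪A v, v⟫ ‖w‖² ≤ ⟪A w, w⟫`, i.e. the Rayleigh quotient does
not decrease when `v` is replaced by `w / ‖w‖`.
-/

open RealInnerProductSpace

section

variable {E : Type*} [NormedAddCommGroup E] [InnerProductSpace ℝ E]

lemma norm_inv_norm_smul_le_one (x : E) : ‖‖x‖⁻¹ • x‖ ≤ 1 := by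
  rcases eq_or_ne x 0 with rfl | hx
  · simp
  · exact (norm_smul_inv_norm (𝕜 := ℝ) hx).le

namespace LinearMap

lemma inner_map_mul_inner_map_le {T : E →ₗ[ℝ] E} (hT : ∀ x, 0 ≤ ⟪T x, x⟫) (x y : E) :
    ⟪T x, y⟫ * ⟪T y, x⟫ ≤ ⟪T x, x⟫ * ⟪T y, y⟫ :=
  BilinForm.apply_mul_apply_le_of_forall_zero_le ((innerₗ E) ∘ₗ T) hT x y

namespace IsPositive

variable {T : E →ₗ[ℝ] E}

lemma inner_map_self_mul_norm_sq_le (hT : T.IsPositive) {v : E} (hv : ‖v‖ ≤ 1) :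
    ⟪T v, v⟫ * ‖T v‖ ^ 2 ≤ ⟪T (T v), T v⟫ := by
  set w := T v
  set c := ⟪T v, v⟫
  have hc : 0 ≤ c := hT.inner_nonneg_left v
  have hcw : c ≤ ‖w‖ :=
    calc c ≤ ‖w‖ * ‖v‖ := real_inner_le_norm w v
      _ ≤ ‖w‖ := mul_le_of_le_one_right (norm_nonneg w) hv
  have hcs : ‖w‖ ^ 2 * ‖w‖ ^ 2 ≤ c * ⟪T w, w⟫ := by
    have h := inner_map_mul_inner_map_le hT.inner_nonneg_left v w
    rwa [hT.isSymmetric w v, real_inner_self_eq_norm_sq] at h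
  have hsq : c * (c * ‖w‖ ^ 2) ≤ c * ⟪T w, w⟫ :=
    calc c * (c * ‖w‖ ^ 2) = c ^ 2 * ‖w‖ ^ 2 := by ring
      _ ≤ ‖w‖ ^ 2 * ‖w‖ ^ 2 := by gcongr
      _ ≤ c * ⟪T w, w⟫ := hcs
  rcases hc.eq_or_lt with hc0 | hcpos
  · rw [← hc0, zero_mul]
    exact hT.inner_nonneg_left w
  · exact le_of_mul_le_mul_left hsq hcpos

lemma inner_map_self_le_inner_map_normalize (hT : T.IsPositive) {v : E} (hv : ‖v‖ ≤ 1) :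
    ⟪T v, v⟫ ≤ ⟪T (‖T v‖⁻¹ • T v), ‖T v‖⁻¹ • T v⟫ := by
  rw [map_smul, real_inner_smul_left, real_inner_smul_right, ← mul_assoc, ← sq, inv_pow]
  rcases eq_or_ne (T v) 0 with hw | hw
  · simp [hw]
  · rw [inv_mul_eq_div, le_div_iff₀ (by positivity)]
    exact hT.inner_map_self_mul_norm_sq_le hv

end IsPositive

end LinearMap

end

theorem stmt8_general {H : Type*} [NormedAddCommGroup H] [InnerProductSpace ℝ H]
    (A : H →L[ℝ] H) (hsa : ∀ x y : H, ⟪A x, y⟫ = ⟪x, A y⟫)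
    (hpsd : ∀ x : H, 0 ≤ ⟪A x, x⟫)
    (u : ℕ → H) (hu0 : ‖u 0‖ = 1)
    (hrec : ∀ n, u (n + 1) = ‖A (u n)‖⁻¹ • A (u n)) :
    ∀ n, -⟪A (u (n + 1)), u (n + 1)⟫ ≤ -⟪A (u n), u n⟫ := by
  have hA : (A : H →ₗ[ℝ] H).IsPositive := (LinearMap.isPositive_iff _).2 ⟨hsa, hpsd⟩
  have hnorm : ∀ n, ‖u n‖ ≤ 1
    | 0 => hu0.le
    | n + 1 => hrec n ▸ norm_inv_norm_smul_le_one _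
  intro n
  rw [neg_le_neg_iff, hrec n]
  exact hA.inner_map_self_le_inner_map_normalize (hnorm n)

theorem stmt8 {H : Type*} [NormedAddCommGroup H] [InnerProductSpace ℝ H]
    (A : H →L[ℝ] H) (hsa : ∀ x y : H, ⟪A x, y⟫ = ⟪x, A y⟫)
    (hpsd : ∀ x : H, 0 ≤ ⟪A x, x⟫)
    (u : ℕ → H) (hu0 : ‖u 0‖ = 1)
    (hnz : ∀ n, A (u n) ≠ 0)
    (hrec : ∀ n, u (n + 1) = ‖A (u n)‖⁻¹ • A (u n)) :
    ∀ n, -⟪A (u (n + 1)), u (n + 1)⟫ ≤ -⟪A (u n), u n⟫ :=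
  stmt8_general A hsa hpsd u hu0 hrec
end

section
/- Let Ω ⊂ ℝ^d and φ = χ_A for measurable A ⊂ Ω. If u* minimizes v ↦ −∫_Ω φ |e^{(τ/2)Δ} v|² dx over unit-norm v ∈ L²(Ω), then u* does not change sign: either u* ≥ 0 a.e. or u* ≤ 0 a.e. -/
/-! If `u` changes sign, then `|u|` is another admissible unit vector, and since the heat kernel is
strictly positive, the positive and negative parts of `u` partially cancel under it:
`|e^{tΔ} u| < e^{tΔ} |u|` at every point. So `|u|` makes `∫_A |e^{tΔ} ·|²` strictly larger on a set
`A` of positive measure, contradicting minimality. Both integrals are finite because convolution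
with an integrable kernel maps `L²` to `L²`, by Cauchy–Schwarz against the measure `|K (x - y)| dy`.
-/

open MeasureTheory Real
open scoped ENNReal

noncomputable def heatKernel (d : ℕ) (t : ℝ) (x : EuclideanSpace ℝ (Fin d)) : ℝ :=
  (4 * π * t) ^ (-(d : ℝ) / 2) * Real.exp (-‖x‖ ^ 2 / (4 * t))

noncomputable def heatConv (d : ℕ) (t : ℝ) (u : EuclideanSpace ℝ (Fin d) → ℝ)
    (x : EuclideanSpace ℝ (Fin d)) : ℝ :=
  ∫ y, heatKernel d t (x - y) * u y

theorem ENNReal.lintegral_mul_sq_le {α : Type*} [MeasurableSpace α] {μ : Measure α}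
    {k g : α → ℝ≥0∞} (hk : AEMeasurable k μ) (hg : AEMeasurable g μ) :
    (∫⁻ a, k a * g a ∂μ) ^ 2 ≤ (∫⁻ a, k a ∂μ) * ∫⁻ a, k a * g a ^ 2 ∂μ := by
  have half : (1 / 2 : ℝ) + 1 / 2 = 1 := by norm_num
  have holder := ENNReal.lintegral_mul_norm_pow_le hk (hk.mul (hg.pow_const 2))
    (by norm_num) (by norm_num) half
  have hsplit : ∀ a, k a ^ (1 / 2 : ℝ) * (k a * g a ^ 2) ^ (1 / 2 : ℝ) = k a * g a := fun a => by
    rw [ENNReal.mul_rpow_of_nonneg _ _ (by norm_num), ← mul_assoc, ← ENNReal.rpow_add_of_nonneg _ _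
      (by norm_num) (by norm_num), half, ENNReal.rpow_one, ← ENNReal.rpow_natCast,
      ← ENNReal.rpow_mul]
    norm_num
  simp only [Pi.mul_apply, hsplit] at holder
  calc (∫⁻ a, k a * g a ∂μ) ^ 2
      ≤ ((∫⁻ a, k a ∂μ) ^ (1 / 2 : ℝ) * (∫⁻ a, k a * g a ^ 2 ∂μ) ^ (1 / 2 : ℝ)) ^ 2 := by gcongr
    _ = (∫⁻ a, k a ∂μ) * ∫⁻ a, k a * g a ^ 2 ∂μ := by
      rw [mul_pow, ← ENNReal.rpow_natCast, ← ENNReal.rpow_mul, ← ENNReal.rpow_natCast,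
        ← ENNReal.rpow_mul]
      norm_num

section Convolution

variable {G : Type*} [MeasurableSpace G] [AddCommGroup G] [MeasurableAdd₂ G] [MeasurableNeg G]
  {μ : Measure G} [μ.IsAddLeftInvariant] [μ.IsNegInvariant] {K u : G → ℝ}

theorem enorm_integral_sub_mul_sq_le (hK : AEStronglyMeasurable K μ)
    (hu : AEStronglyMeasurable u μ) (x : G) :
    ‖∫ y, K (x - y) * u y ∂μ‖ₑ ^ 2 ≤ (∫⁻ z, ‖K z‖ₑ ∂μ) * ∫⁻ y, ‖K (x - y)‖ₑ * ‖u y‖ₑ ^ 2 ∂μ := by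
  have hsub := Measure.measurePreserving_sub_left μ x
  have hKx : AEMeasurable (fun y => ‖K (x - y)‖ₑ) μ :=
    (hK.comp_quasiMeasurePreserving hsub.quasiMeasurePreserving).enorm
  calc ‖∫ y, K (x - y) * u y ∂μ‖ₑ ^ 2
      ≤ (∫⁻ y, ‖K (x - y)‖ₑ * ‖u y‖ₑ ∂μ) ^ 2 := by
        gcongr
        simpa only [enorm_mul] using enorm_integral_le_lintegral_enorm (fun y => K (x - y) * u y)
    _ ≤ (∫⁻ y, ‖K (x - y)‖ₑ ∂μ) * ∫⁻ y, ‖K (x - y)‖ₑ * ‖u y‖ₑ ^ 2 ∂μ :=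
        ENNReal.lintegral_mul_sq_le hKx hu.enorm
    _ = (∫⁻ z, ‖K z‖ₑ ∂μ) * ∫⁻ y, ‖K (x - y)‖ₑ * ‖u y‖ₑ ^ 2 ∂μ := by
        rw [hsub.lintegral_comp_emb (MeasurableEquiv.subLeft x).measurableEmbedding
          (fun z => ‖K z‖ₑ)]

theorem lintegral_enorm_integral_sub_mul_sq_le [SFinite μ] (hK : Integrable K μ)
    (hu : AEStronglyMeasurable u μ) :
    ∫⁻ x, ‖∫ y, K (x - y) * u y ∂μ‖ₑ ^ 2 ∂μ ≤
      (∫⁻ z, ‖K z‖ₑ ∂μ) ^ 2 * ∫⁻ y, ‖u y‖ₑ ^ 2 ∂μ := by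
  set I := ∫⁻ z, ‖K z‖ₑ ∂μ
  have hI : I ≠ ∞ := hK.hasFiniteIntegral.ne
  have hF : AEMeasurable (Function.uncurry fun x y => ‖K (x - y)‖ₑ * ‖u y‖ₑ ^ 2) (μ.prod μ) :=
    (hK.aestronglyMeasurable.comp_quasiMeasurePreserving (quasiMeasurePreserving_sub μ μ)).enorm.mul
      (hu.enorm.pow_const 2).comp_snd
  calc ∫⁻ x, ‖∫ y, K (x - y) * u y ∂μ‖ₑ ^ 2 ∂μ
      ≤ ∫⁻ x, I * ∫⁻ y, ‖K (x - y)‖ₑ * ‖u y‖ₑ ^ 2 ∂μ ∂μ :=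
        lintegral_mono fun x => enorm_integral_sub_mul_sq_le hK.aestronglyMeasurable hu x
    _ = I * ∫⁻ y, ∫⁻ x, ‖K (x - y)‖ₑ * ‖u y‖ₑ ^ 2 ∂μ ∂μ := by
        rw [lintegral_const_mul' _ _ hI, lintegral_lintegral_swap hF]
    _ = I ^ 2 * ∫⁻ y, ‖u y‖ₑ ^ 2 ∂μ := by
        have hKy : ∀ y, ∫⁻ x, ‖K (x - y)‖ₑ ∂μ = I := fun y =>
          (measurePreserving_sub_right μ y).lintegral_comp_emb
            (MeasurableEquiv.subRight y).measurableEmbedding (fun z => ‖K z‖ₑ)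
        simp_rw [lintegral_mul_const' _ _ (ENNReal.pow_ne_top enorm_ne_top), hKy,
          lintegral_const_mul' _ _ hI, sq, mul_assoc]

theorem memLp_two_integral_sub_mul [SFinite μ] (hK : Integrable K μ) (hu : MemLp u 2 μ) :
    MemLp (fun x => ∫ y, K (x - y) * u y ∂μ) 2 μ := by
  have hmeas : AEStronglyMeasurable (fun x => ∫ y, K (x - y) * u y ∂μ) μ :=
    ((hK.aestronglyMeasurable.comp_quasiMeasurePreserving (quasiMeasurePreserving_sub μ μ)).mul
      hu.aestronglyMeasurable.comp_snd).integral_prod_right'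
  have hu_sq : ∫⁻ y, ‖u y‖ₑ ^ 2 ∂μ < ∞ := by
    simpa only [hasFiniteIntegral_iff_enorm, enorm_pow] using hu.integrable_sq.hasFiniteIntegral
  refine (memLp_two_iff_integrable_sq hmeas).2 ⟨hmeas.pow 2, ?_⟩
  rw [hasFiniteIntegral_iff_enorm]
  simp_rw [enorm_pow]
  exact (lintegral_enorm_integral_sub_mul_sq_le hK hu.1).trans_lt
    (ENNReal.mul_lt_top (ENNReal.pow_lt_top hK.hasFiniteIntegral) hu_sq)

end Convolution

section PositiveWeight

variable {α : Type*} [MeasurableSpace α] {μ : Measure α}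

theorem integral_mul_pos_of_pos_of_nonneg {k f : α → ℝ} (hk : ∀ a, 0 < k a) (hf : 0 ≤ f)
    (hkf : Integrable (fun a => k a * f a) μ) (hsupp : μ (Function.support f) ≠ 0) :
    0 < ∫ a, k a * f a ∂μ := by
  have hsupp_eq : Function.support (fun a => k a * f a) = Function.support f :=
    Function.support_mul_of_ne_zero_left (fun a => (hk a).ne') f
  rw [integral_pos_iff_support_of_nonneg (fun a => mul_nonneg (hk a).le (hf a)) hkf, hsupp_eq]
  exact pos_iff_ne_zero.2 hsupp

theorem abs_integral_mul_lt_integral_mul_abs {k f : α → ℝ} (hk : ∀ a, 0 < k a)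
    (hkf : Integrable (fun a => k a * f a) μ) (hneg : μ {a | f a < 0} ≠ 0)
    (hpos : μ {a | 0 < f a} ≠ 0) :
    |∫ a, k a * f a ∂μ| < ∫ a, k a * |f a| ∂μ := by
  have hkf_abs : Integrable (fun a => k a * |f a|) μ := by
    simpa only [abs_mul, abs_of_pos (hk _)] using hkf.abs
  have hsub : 0 < ∫ a, k a * (|f a| - f a) ∂μ := by
    refine integral_mul_pos_of_pos_of_nonneg hk (fun a => sub_nonneg.2 (le_abs_self _))
      (by simp only [mul_sub]; exact hkf_abs.sub hkf) ?_
    simpa only [Function.support, sub_ne_zero, ne_eq, abs_eq_self, not_le] using hneg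
  have hadd : 0 < ∫ a, k a * (|f a| + f a) ∂μ := by
    refine integral_mul_pos_of_pos_of_nonneg hk (fun a => neg_le_iff_add_nonneg.1 (neg_le_abs _))
      (by simp only [mul_add]; exact hkf_abs.add hkf) ?_
    simpa only [Function.support, ← eq_neg_iff_add_eq_zero, ne_eq, abs_eq_neg_self, not_le]
      using hpos
  simp only [mul_sub, mul_add] at hsub hadd
  rw [integral_sub hkf_abs hkf] at hsub
  rw [integral_add hkf_abs hkf] at hadd
  exact abs_lt.2 ⟨by linarith, by linarith⟩

theorem setIntegral_lt_setIntegral_of_forall_lt {s : Set α} {f g : α → ℝ} (hs : μ s ≠ 0) (hf : IntegrableOn f s μ)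
    (hg : IntegrableOn g s μ) (hfg : ∀ a, f a < g a) :
    ∫ a in s, f a ∂μ < ∫ a in s, g a ∂μ := by
  have hsupp : Function.support (g - f) = Set.univ :=
    Set.eq_univ_of_forall fun a => sub_ne_zero.2 (hfg a).ne'
  have hpos : 0 < ∫ a in s, (g - f) a ∂μ := by
    rw [integral_pos_iff_support_of_nonneg (f := g - f) (fun a => sub_nonneg.2 (hfg a).le)
      (hg.sub hf), hsupp, Measure.restrict_apply_univ]
    exact pos_iff_ne_zero.2 hs
  rw [Pi.sub_def, integral_sub hg hf] at hpos
  linarith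

end PositiveWeight

section Gaussian

variable {V : Type*} [NormedAddCommGroup V] [InnerProductSpace ℝ V] [FiniteDimensional ℝ V]
  [MeasurableSpace V] [BorelSpace V] {b : ℝ}

theorem integrable_exp_neg_mul_sq_norm (hb : 0 < b) :
    Integrable (fun x : V => rexp (-b * ‖x‖ ^ 2)) := by
  have h := (GaussianFourier.integrable_cexp_neg_mul_sq_norm_add (V := V)
    (b := (b : ℂ)) (by simpa using hb) 0 0).norm
  refine h.congr (ae_of_all _ fun x => ?_)
  simp [Complex.norm_exp, ← Complex.ofReal_pow]

theorem memLp_two_exp_neg_mul_sq_norm (hb : 0 < b) :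
    MemLp (fun x : V => rexp (-b * ‖x‖ ^ 2)) 2 := by
  refine (memLp_two_iff_integrable_sq (by fun_prop)).2 ?_
  simpa only [← Real.exp_nat_mul, ← mul_assoc, neg_mul, Nat.cast_ofNat, mul_neg] using
    integrable_exp_neg_mul_sq_norm (V := V) (mul_pos two_pos hb)

end Gaussian

section HeatKernel

variable {d : ℕ} {t : ℝ}

theorem heatKernel_eq_mul_exp :
    heatKernel d t = fun x => (4 * π * t) ^ (-(d : ℝ) / 2) * rexp (-(4 * t)⁻¹ * ‖x‖ ^ 2) := by
  ext x
  rw [heatKernel]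
  congr 2
  ring

theorem heatKernel_pos (ht : 0 < t) (x : EuclideanSpace ℝ (Fin d)) : 0 < heatKernel d t x := by
  have : 0 < 4 * π * t := by positivity
  unfold heatKernel
  positivity

theorem integrable_heatKernel (ht : 0 < t) : Integrable (heatKernel d t) := by
  rw [heatKernel_eq_mul_exp]
  exact (integrable_exp_neg_mul_sq_norm (by positivity)).const_mul _

theorem memLp_two_heatKernel (ht : 0 < t) : MemLp (heatKernel d t) 2 := by
  rw [heatKernel_eq_mul_exp]
  exact (memLp_two_exp_neg_mul_sq_norm (by positivity)).const_mul _

end HeatKernel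

section HeatConv

variable {d : ℕ} {t : ℝ} {u : EuclideanSpace ℝ (Fin d) → ℝ}

theorem memLp_two_heatConv (ht : 0 < t) (hu : MemLp u 2) : MemLp (heatConv d t u) 2 :=
  memLp_two_integral_sub_mul (integrable_heatKernel ht) hu

theorem integrable_heatKernel_sub_mul (ht : 0 < t) (hu : MemLp u 2)
    (x : EuclideanSpace ℝ (Fin d)) : Integrable (fun y => heatKernel d t (x - y) * u y) :=
  ((memLp_two_heatKernel ht).comp_measurePreserving
    (Measure.measurePreserving_sub_left volume x)).integrable_mul hu

theorem abs_heatConv_lt_heatConv_abs (ht : 0 < t) (hu : MemLp u 2)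
    (hneg : volume {y | u y < 0} ≠ 0) (hpos : volume {y | 0 < u y} ≠ 0)
    (x : EuclideanSpace ℝ (Fin d)) : |heatConv d t u x| < heatConv d t (fun y => |u y|) x :=
  abs_integral_mul_lt_integral_mul_abs (fun y => heatKernel_pos ht (x - y))
    (integrable_heatKernel_sub_mul ht hu x) hneg hpos

end HeatConv

theorem stmt15_general {d : ℕ} (A : Set (EuclideanSpace ℝ (Fin d)))
    (hApos : 0 < volume A)
    (τ : ℝ) (hτ : 0 < τ)
    (ustar : EuclideanSpace ℝ (Fin d) → ℝ) (hum : MemLp ustar 2 volume)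
    (hnorm : ∫ x, (ustar x) ^ 2 = 1)
    (hmin : ∀ v : EuclideanSpace ℝ (Fin d) → ℝ, MemLp v 2 volume →
      (∫ x, (v x) ^ 2) = 1 →
      -(∫ x in A, (heatConv d (τ / 2) ustar x) ^ 2) ≤
        -(∫ x in A, (heatConv d (τ / 2) v x) ^ 2)) :
    (∀ᵐ x, 0 ≤ ustar x) ∨ (∀ᵐ x, ustar x ≤ 0) := by
  by_contra! hsign
  obtain ⟨hneg, hpos⟩ := hsign
  rw [frequently_ae_iff] at hneg hpos
  have ht : 0 < τ / 2 := half_pos hτ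
  have habs : MemLp (fun x => |ustar x|) 2 := hum.abs
  have hsq : ∀ x, heatConv d (τ / 2) ustar x ^ 2 < heatConv d (τ / 2) (fun y => |ustar y|) x ^ 2 :=
    fun x => (abs_lt.1 (abs_heatConv_lt_heatConv_abs ht hum hneg hpos x)).elim sq_lt_sq'
  have hlt := setIntegral_lt_setIntegral_of_forall_lt hApos.ne'
    (memLp_two_heatConv ht hum).integrable_sq.integrableOn
    (memLp_two_heatConv ht habs).integrable_sq.integrableOn hsq
  have hle := hmin _ habs (by simpa only [sq_abs] using hnorm)
  linarith

theorem stmt15 {d : ℕ} (Ω A : Set (EuclideanSpace ℝ (Fin d)))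
    (hA : MeasurableSet A) (hAΩ : A ⊆ Ω) (hApos : 0 < volume A)
    (τ : ℝ) (hτ : 0 < τ)
    (ustar : EuclideanSpace ℝ (Fin d) → ℝ) (hum : MemLp ustar 2 volume)
    (hnorm : ∫ x, (ustar x) ^ 2 = 1)
    (hmin : ∀ v : EuclideanSpace ℝ (Fin d) → ℝ, MemLp v 2 volume →
      (∫ x, (v x) ^ 2) = 1 →
      -(∫ x in A, (heatConv d (τ / 2) ustar x) ^ 2) ≤
        -(∫ x in A, (heatConv d (τ / 2) v x) ^ 2)) :
    (∀ᵐ x, 0 ≤ ustar x) ∨ (∀ᵐ x, ustar x ≤ 0) :=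
  stmt15_general A hApos τ hτ ustar hum hnorm hmin
end
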